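/- Let (S, L) be a total abstract cubic, G_S its reflection group, and B₀ the normal closure in G_S of {t_a t_b t_c t_{a'} t_b t_{c'} : (a,b,c) ∈ L, (a',b,c') ∈ L}. If x ≈ x' (where ≈ is the universal admissible equivalence, i.e. x ≈_i x' for some i), then t_x t_{x'} ∈ B₀. -/

import Mathlib

/-- The defining relators of the reflection group of an abstract cubic `(S, L)`:
`(t_x)^2` for all `x`, and `(t_x t_y t_z)^2` for all collinear triples `(x,y,z) ∈ L`. -/
def cubicRels (S : Type*) (L : S → S → S → Prop) : Set (FreeGroup S) :=
  {r | (∃ x : S, r = FreeGroup.of x ^ 2) ∨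
    ∃ x y z : S, L x y z ∧ r = (FreeGroup.of x * FreeGroup.of y * FreeGroup.of z) ^ 2}

/-- The reflection group `G_S` of an abstract cubic, as a presented group. -/
abbrev ReflGroup (S : Type*) (L : S → S → S → Prop) : Type _ :=
  PresentedGroup (cubicRels S L)

/-- The generator (reflection) `t_x` of the reflection group. -/
def tgen (S : Type*) (L : S → S → S → Prop) (x : S) : ReflGroup S L :=
  PresentedGroup.of x

/-- The approximating equivalence relations `≈_i` of §3: `≈_0` is equality, and `≈_{i+1}` is the
transitive closure of the relation `∼_{i+1}` (see `simR`). -/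
def approxR {S : Type*} (L : S → S → S → Prop) : ℕ → S → S → Prop
  | 0 => Eq
  | i + 1 => Relation.TransGen (fun x x' => x = x' ∨ ∃ u v u' v' : S,
      approxR L i u u' ∧ approxR L i v v' ∧ L u v x ∧ L u' v' x')

/-- The relations `∼_i` of §3: `∼_0` is equality, and `x ∼_{i+1} x'` iff `x = x'` or there are
`u ≈_i u'`, `v ≈_i v'` with `(u,v,x) ∈ L` and `(u',v',x') ∈ L`. -/
def simR {S : Type*} (L : S → S → S → Prop) : ℕ → S → S → Prop
  | 0 => Eq
  | i + 1 => fun x x' => x = x' ∨ ∃ u v u' v' : S,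
      approxR L i u u' ∧ approxR L i v v' ∧ L u v x ∧ L u' v' x'

/-- An equivalence relation `r` on `S` is admissible if on `S/r` the induced collinearity
relation `L/r` (three classes are collinear iff they contain representatives forming a
collinear triple) defines a composition: for all classes `X, Y` there is a unique class `Z`
with `(X,Y,Z) ∈ L/r`. -/
def AdmissibleRel {S : Type*} (L : S → S → S → Prop) (r : S → S → Prop) : Prop :=
  Equivalence r ∧
  ∀ x y : S, ∃ z : S,
    (∃ x' y' z' : S, r x x' ∧ r y y' ∧ r z z' ∧ L x' y' z') ∧
    ∀ w : S, (∃ x' y' w' : S, r x x' ∧ r y y' ∧ r w w' ∧ L x' y' w') → r z w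

/-- The set of generators of the subgroup `B₀ ⊆ G_S`: elements `t_a t_b t_c t_{a'} t_b t_{c'}`
for collinear triples `(a,b,c) ∈ L` and `(a',b,c') ∈ L` sharing the middle point `b`.
`B₀` itself is the normal closure of this set in `G_S`. -/
def B0Gens (S : Type*) (L : S → S → S → Prop) : Set (ReflGroup S L) :=
  {g | ∃ a b c a' c' : S, L a b c ∧ L a' b c' ∧
    g = tgen S L a * tgen S L b * tgen S L c * tgen S L a' * tgen S L b * tgen S L c'}

/-- The subgroup `Bⁱ ⊆ G_S`: the normal closure of `{t_u t_{u'} : u ∼_i u'}`. -/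
def Bn (S : Type*) (L : S → S → S → Prop) (i : ℕ) : Subgroup (ReflGroup S L) :=
  Subgroup.normalClosure {g | ∃ u u' : S, simR L i u u' ∧ g = tgen S L u * tgen S L u'}

/-! Since the reflections are involutions, `t_x t_{x'} ∈ B₀` says that `t_x` and `t_{x'}` have
the same image in `G_S ⧸ B₀`. It therefore suffices that every map `f : S → H` into a group with
`f a * f b * f c * f a' * f b * f c' = 1` for `(a,b,c), (a',b,c') ∈ L` is constant on
`≈`-classes. Two collinear triples through a common point with `f`-equal first points have
`f`-equal third points; for a step `x ∼_{i+1} x'` witnessed by `(u,v,x)`, `(u',v',x')`, totality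
provides `w` with `(u',v,w) ∈ L`, and `x, w` and then `w, x'` are related in this way. -/

section ConstantOnClasses

variable {S : Type*} {L : S → S → S → Prop} {H : Type*} [Group H] {f : S → H}

def RespectsB0Gens (L : S → S → S → Prop) (f : S → H) : Prop :=
  ∀ a b c a' c', L a b c → L a' b c' → f a * f b * f c * f a' * f b * f c' = 1

/-- With `p = f u * f v`, the relations give `p * f x * p * f x' = 1 = p * f x * p * f x`,
so `f x' = f x` by cancellation. -/
theorem RespectsB0Gens.eq_of_collinear_of_eq (hf : RespectsB0Gens L f) {u v x u' x' : S}
    (h : L u v x) (h' : L u' v x') (hu : f u = f u') : f x = f x' := by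
  have hx' := hf u v x u' x' h h'
  have hx := hf u v x u x h h
  rw [← hu, ← hx] at hx'
  exact (mul_left_cancel hx').symm

theorem RespectsB0Gens.eq_of_collinear_of_eq_of_eq (hf : RespectsB0Gens L f)
    (hsym₁ : ∀ x y z, L x y z → L y x z) (htotal : ∀ x y : S, ∃ z : S, L x y z)
    {u v x u' v' x' : S} (h : L u v x) (h' : L u' v' x') (hu : f u = f u') (hv : f v = f v') :
    f x = f x' := by
  obtain ⟨w, hw⟩ := htotal u' v
  calc f x = f w := hf.eq_of_collinear_of_eq h hw hu
    _ = f x' := hf.eq_of_collinear_of_eq (hsym₁ _ _ _ hw) (hsym₁ _ _ _ h') hv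

theorem RespectsB0Gens.eq_of_approxR (hf : RespectsB0Gens L f)
    (hsym₁ : ∀ x y z, L x y z → L y x z) (htotal : ∀ x y : S, ∃ z : S, L x y z) :
    ∀ {i : ℕ} {x x' : S}, approxR L i x x' → f x = f x'
  | 0, _, _, h => congrArg f h
  | i + 1, _, _, h => by
    have hstep : ∀ y y', (y = y' ∨ ∃ u v u' v' : S,
        approxR L i u u' ∧ approxR L i v v' ∧ L u v y ∧ L u' v' y') → f y = f y' := by
      rintro y y' (rfl | ⟨u, v, u', v', hu, hv, h, h'⟩)
      · rfl
      · exact hf.eq_of_collinear_of_eq_of_eq hsym₁ htotal h h'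
          (hf.eq_of_approxR hsym₁ htotal hu) (hf.eq_of_approxR hsym₁ htotal hv)
    simpa only [Relation.transGen_eq_self] using h.lift f hstep

end ConstantOnClasses

theorem tgen_mul_self {S : Type*} (L : S → S → S → Prop) (x : S) :
    tgen S L x * tgen S L x = 1 := by
  rw [tgen, PresentedGroup.of, ← map_mul]
  exact PresentedGroup.one_of_mem (Or.inl ⟨x, (sq _).symm⟩)

theorem respectsB0Gens_mk_tgen {S : Type*} (L : S → S → S → Prop) :
    RespectsB0Gens L fun x ↦
      (QuotientGroup.mk (tgen S L x) : ReflGroup S L ⧸ Subgroup.normalClosure (B0Gens S L)) := by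
  intro a b c a' c' h h'
  simp only [← QuotientGroup.mk_mul, QuotientGroup.eq_one_iff]
  exact Subgroup.subset_normalClosure ⟨a, b, c, a', c', h, h', rfl⟩

theorem stmt_12_general {S : Type*} (L : S → S → S → Prop)
    (hsym₁ : ∀ x y z, L x y z → L y x z)
    (htotal : ∀ x y : S, ∃ z : S, L x y z)
    (x x' : S) (h : ∃ i, approxR L i x x') :
    tgen S L x * tgen S L x' ∈ Subgroup.normalClosure (B0Gens S L) := by
  obtain ⟨i, h⟩ := h
  have hmk := (respectsB0Gens_mk_tgen L).eq_of_approxR hsym₁ htotal h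
  rwa [QuotientGroup.eq, inv_eq_of_mul_eq_one_right (tgen_mul_self L x)] at hmk

/-- if `x ≈ x'` (i.e. `x ≈_i x'` for some `i`, the universal admissible
equivalence), then `t_x t_{x'} ∈ B₀`. -/
theorem stmt_12 {S : Type*} (L : S → S → S → Prop)
    (hsym₁ : ∀ x y z, L x y z → L y x z)
    (hsym₂ : ∀ x y z, L x y z → L x z y)
    (huniq : ∀ x y z z', L x y z → L x y z' → x ≠ y → z = z')
    (htotal : ∀ x y : S, ∃ z : S, L x y z)
    (x x' : S) (h : ∃ i, approxR L i x x') :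
    tgen S L x * tgen S L x' ∈ Subgroup.normalClosure (B0Gens S L) :=
  stmt_12_general L hsym₁ htotal x x' h
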